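/- For one-dimensional M-CLP with A=[1], β > 0, b > 0, γ < 0, c > 0, and time horizon T = −γ/c, the optimal solution is not unique: for every u⁰ with 0 ≤ u⁰ ≤ β, the control U(t) = u⁰ (a single impulse of size u⁰ at time 0) is an optimal solution of M-CLP, all achieving the same objective value. -/

import Mathlib

open MeasureTheory Set

noncomputable def sObj (T g c : ℝ) (U : StieltjesFunction ℝ) : ℝ :=
  ∫ t in Icc (0:ℝ) T, (g + (T - t) * c) ∂U.measure

def sFeasP (β b T : ℝ) (U : StieltjesFunction ℝ) : Prop :=
  (∀ t < (0:ℝ), U t = 0) ∧ (∀ t, 0 ≤ U t) ∧ ∀ t ∈ Icc (0:ℝ) T, U t ≤ β + b * t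

/-
The objective coefficient `γ + (T - t) c` is nonpositive on `[0, T]` and vanishes at `t = 0`
exactly when `T = -γ/c`. Hence every control, feasible or not, has nonpositive objective value,
while an impulse at time `0`, whose measure is a multiple of the Dirac mass at `0`, only sees
the coefficient at `0` and has objective value `0`.
-/

open ProbabilityTheory
open scoped NNReal

noncomputable def impulse (a : ℝ) (u : ℝ≥0) : StieltjesFunction ℝ :=
  u • cdf (Measure.dirac a)

lemma impulse_apply (a : ℝ) (u : ℝ≥0) (t : ℝ) :
    impulse a u t = if a ≤ t then (u : ℝ) else 0 := by
  change (u : ℝ) * cdf (Measure.dirac a) t = _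
  rw [cdf_eq_real, measureReal_def, Measure.dirac_apply' _ measurableSet_Iic]
  by_cases h : a ≤ t <;> simp [h]

lemma measure_impulse (a : ℝ) (u : ℝ≥0) : (impulse a u).measure = u • Measure.dirac a := by
  rw [impulse, StieltjesFunction.measure_smul, measure_cdf]

lemma sObj_impulse_zero {T : ℝ} (hT : 0 ≤ T) (g c : ℝ) (u : ℝ≥0) :
    sObj T g c (impulse 0 u) = u * (g + T * c) := by
  rw [sObj, measure_impulse, Measure.restrict_smul, integral_smul_nnreal_measure,
    setIntegral_dirac, if_pos (left_mem_Icc.mpr hT), sub_zero, NNReal.smul_def, smul_eq_mul]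

lemma sObj_nonpos {T g c : ℝ} (hc : 0 ≤ c) (hgT : g + T * c ≤ 0) (U : StieltjesFunction ℝ) :
    sObj T g c U ≤ 0 :=
  setIntegral_nonpos measurableSet_Icc fun t ht => by nlinarith [ht.1]

lemma sFeasP_impulse_zero {β b : ℝ} (T : ℝ) (hb : 0 ≤ b) {u : ℝ≥0} (hu : (u : ℝ) ≤ β) :
    sFeasP β b T (impulse 0 u) := by
  refine ⟨fun t ht => ?_, fun t => ?_, fun t ht => ?_⟩
  · simp [impulse_apply, not_le.mpr ht]
  · rw [impulse_apply]; split_ifs <;> simp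
  · rw [impulse_apply, if_pos ht.1]; nlinarith [ht.1]

theorem mclp_one_dim_case3_nonunique_general (β b γ c T : ℝ)
    (hb : 0 < b) (hγ : γ < 0) (hc : 0 < c) (hT : T = -γ / c) :
    ∀ u0 : ℝ, 0 ≤ u0 → u0 ≤ β →
      ∃ U : StieltjesFunction ℝ,
        (∀ t < (0:ℝ), U t = 0) ∧ (∀ t ∈ Icc (0:ℝ) T, U t = u0) ∧
        sFeasP β b T U ∧
        (∀ U' : StieltjesFunction ℝ, sFeasP β b T U' → sObj T γ c U' ≤ sObj T γ c U) ∧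
        sObj T γ c U = 0 := by
  intro u0 hu0 hu0β
  let u : ℝ≥0 := ⟨u0, hu0⟩
  have hT_nonneg : 0 ≤ T := hT ▸ div_nonneg (neg_nonneg.mpr hγ.le) hc.le
  have hγT : γ + T * c = 0 := by rw [hT]; field_simp; ring
  have hzero : sObj T γ c (impulse 0 u) = 0 := by
    rw [sObj_impulse_zero hT_nonneg, hγT, mul_zero]
  have hfeas : sFeasP β b T (impulse 0 u) := sFeasP_impulse_zero T hb.le hu0β
  refine ⟨impulse 0 u, hfeas.1, fun t ht => ?_, hfeas, fun U' _ => ?_, hzero⟩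
  · rw [impulse_apply, if_pos ht.1]; rfl
  · rw [hzero]; exact sObj_nonpos hc.le hγT.le U'

/-- Case 3 at the critical horizon T = -γ/c (β>0, b>0, γ<0, c>0): the optimal
solution is not unique.  For every 0 ≤ u⁰ ≤ β, the single impulse of size u⁰
at time 0 is an optimal solution, and all these solutions have the same
objective value. -/
theorem mclp_one_dim_case3_nonunique (β b γ c T : ℝ)
    (hβ : 0 < β) (hb : 0 < b) (hγ : γ < 0) (hc : 0 < c) (hT : T = -γ / c) :
    ∀ u0 : ℝ, 0 ≤ u0 → u0 ≤ β →
      ∃ U : StieltjesFunction ℝ,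
        (∀ t < (0:ℝ), U t = 0) ∧ (∀ t ∈ Icc (0:ℝ) T, U t = u0) ∧
        sFeasP β b T U ∧
        (∀ U' : StieltjesFunction ℝ, sFeasP β b T U' → sObj T γ c U' ≤ sObj T γ c U) ∧
        sObj T γ c U = 0 :=
  mclp_one_dim_case3_nonunique_general β b γ c T hb hγ hc hT
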